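/- arXiv:2304.12843 — 2 statements merged into one kernel-verified Lean document; each statement's English description precedes it below -/
import Mathlib

section
/- Under the PART 3 setup, assume in addition that the restriction f' of f to 𝓓' is non-dictatorial. Let R̄_{-i}, R̂_{-i} ∈ ∏_{j≠i} 𝓡_j be two subprofiles satisfying: (a) O_i(R̄_{-i}, 𝓡'_i) = {x} and O_i(R̄_{-i}, 𝓡_i) = {x, y}; (b) O_i(R̂_{-i}, 𝓡'_i) = O_i(R̂_{-i}, 𝓡_i) and this common set equals {z} or {x, z}; (c) for all subprofiles R̄'_{-i}, R̂'_{-i} satisfying (a) and (b) respectively, d_{r(f)}(R̄'_{-i}, R̂'_{-i}) ≥ d_{r(f)}(R̄_{-i}, R̂_{-i}); and (d) R̄_j = R̂_j for all j ∉ D_{r(f)}(R̄_{-i}, R̂_{-i}). Then for every agent j ∈ D_{r(f)}(R̄_{-i}, R̂_{-i}), both {x, y} ∈ S^{-1}(𝓡_j) and {x, z} ∈ S^{-1}(𝓡_j). -/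
/-- A preference is represented by its strict relation `P`, where `P a b` means
`a` is strictly preferred to `b`. -/
abbrev Pref (X : Type*) := X → X → Prop

/-- The universal domain: all strict linear orders (strict total orders) on `X`. -/
def univDomain (X : Type*) : Set (Pref X) := {P | IsStrictTotalOrder X P}

/-- `S(𝓑)`: the set of ordered pairs of distinct alternatives that are fixed
(ranked the same way) throughout the domain `𝓑`. -/
def fixedPairs {X : Type*} (B : Set (Pref X)) : Set (X × X) :=
  {p | p.1 ≠ p.2 ∧ ∀ P ∈ B, P p.1 p.2}

/-- A preference domain is non-conditional if it consists exactly of the strict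
linear orders respecting all of its fixed pairs. -/
def NonConditional {X : Type*} (B : Set (Pref X)) : Prop :=
  B = {P | P ∈ univDomain X ∧ ∀ p ∈ fixedPairs B, P p.1 p.2}

/-- `{x, y} ∈ S⁻¹(𝓑)`: the unordered pair `{x, y}` is a free pair of `𝓑`. -/
def FreePair {X : Type*} (B : Set (Pref X)) (x y : X) : Prop :=
  x ≠ y ∧ (x, y) ∉ fixedPairs B ∧ (y, x) ∉ fixedPairs B

/-- The profile `R` lies in the product domain `∏ i, 𝓡 i`. -/
def InDomain {N X : Type*} (𝓡 : N → Set (Pref X)) (R : N → Pref X) : Prop :=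
  ∀ i, R i ∈ 𝓡 i

/-- The range `r(f)` of a social choice rule `f` over the domain `𝓡`. -/
def scrRange {N X : Type*} (𝓡 : N → Set (Pref X)) (f : (N → Pref X) → X) : Set X :=
  {x | ∃ R, InDomain 𝓡 R ∧ f R = x}

/-- Strategy-proofness of `f` on the product domain `𝓡`: no agent `i` can, at any
profile of the domain, obtain a strictly preferred outcome by misreporting. -/
def StrategyProof {N X : Type*} [DecidableEq N] (𝓡 : N → Set (Pref X))
    (f : (N → Pref X) → X) : Prop :=
  ∀ R, InDomain 𝓡 R → ∀ i, ∀ P' ∈ 𝓡 i, ¬ R i (f (Function.update R i P')) (f R)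

/-- `f` is a dictatorship of agent `i` on the domain `𝓡`: at every profile of the
domain, `f` selects an outcome weakly preferred by `i` to every element of the range. -/
def Dictatorship {N X : Type*} (𝓡 : N → Set (Pref X)) (f : (N → Pref X) → X)
    (i : N) : Prop :=
  ∀ R, InDomain 𝓡 R → ∀ x ∈ scrRange 𝓡 f, f R = x ∨ R i (f R) x

/-- `f` is non-dictatorial on the domain `𝓡`. -/
def NonDictatorial {N X : Type*} (𝓡 : N → Set (Pref X)) (f : (N → Pref X) → X) : Prop :=
  ∀ i, ¬ Dictatorship 𝓡 f i

/-- The option set `O_i(R_{-i}, 𝓑)` of agent `i` at the subprofile `R_{-i}`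
relative to the set of preferences `𝓑`. -/
def optionSet {N X : Type*} [DecidableEq N] (f : (N → Pref X) → X) (i : N)
    (R : N → Pref X) (B : Set (Pref X)) : Set X :=
  {x | ∃ P ∈ B, f (Function.update R i P) = x}

/-- `D_S(R_{-i}, R'_{-i})`: the set of agents `j ≠ i` whose preferences at the two
subprofiles differ when restricted to the set of alternatives `S`. -/
def diffAgents {N X : Type*} (i : N) (S : Set X) (R R' : N → Pref X) : Set N :=
  {j | j ≠ i ∧ ¬ ∀ a ∈ S, ∀ b ∈ S, (R j a b ↔ R' j a b)}

/-!
Write `W(Q)` and `V(Q)` for agent `i`'s option sets at a subprofile `Q` relative to `𝓡 i` and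
`𝓡' i`. Strategy-proofness for `i` gives `V(Q) = W(Q) \ {y}`, so condition (a) says that `y ∈ W(Q)`
and `z ∉ W(Q)`, and condition (b) that `y ∉ W(Q)` and `z ∈ W(Q)`. Fix `j ∈ D`. By the minimality
(c), replacing `R̂ j` by `R̄ j` in `R̂` destroys (b), and replacing `R̄ j` by `R̂ j` in `R̄`
destroys (a). In either case there are two preferences of `i` at which `j`'s move turns two
distinct outcomes `a` and `b` into one third outcome `c`. Were `a ≻ b` fixed in `𝓡 j`, `j` could
instead report `a ≻ c ≻ b`; this leaves `a` at the first preference of `i` and turns `b` into `c`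
at the second, and at one of the two `i` would gain by reporting the other. With `c = y` this makes
`{x, z}` free for `j`, and with `c = z` it makes `{x, y}` free.
-/

open Function

section Relations

variable {X : Type*}

theorem exists_isStrictTotalOrder_le (r : X → X → Prop) [IsStrictOrder X r] :
    ∃ s : X → X → Prop, IsStrictTotalOrder X s ∧ r ≤ s := by
  let := partialOrderOfSO r
  refine ⟨fun a b => toLinearExtension a < toLinearExtension b,
    inferInstanceAs (IsStrictTotalOrder (LinearExtension X) (· < ·)), fun a b hab => ?_⟩
  exact toLinearExtension.monotone.strictMono_of_injective (fun _ _ h => h) hab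

/-- The transitive closure of a strict order `r` together with the pair `(a, b)`. -/
def adjoinPair (r : X → X → Prop) (a b : X) : X → X → Prop :=
  fun u v => r u v ∨ ((u = a ∨ r u a) ∧ (b = v ∨ r b v))

theorem isStrictOrder_adjoinPair {r : X → X → Prop} [IsStrictOrder X r] {a b : X}
    (hab : a ≠ b) (hba : ¬ r b a) : IsStrictOrder X (adjoinPair r a b) := by
  have le_trans : ∀ {u v w}, (u = v ∨ r u v) → (v = w ∨ r v w) → (u = w ∨ r u w) := by
    rintro u v w (rfl | huv) hvw
    exacts [hvw, Or.inr (hvw.elim (· ▸ huv) (_root_.trans huv))]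
  have not_le_ba : ∀ {v}, (b = v ∨ r b v) → (v = a ∨ r v a) → False := fun hbv hva =>
    (le_trans hbv hva).elim hab.symm hba
  refine { irrefl := ?_, trans := ?_ }
  · rintro u (huu | ⟨hua, hbu⟩)
    exacts [irrefl u huu, not_le_ba hbu hua]
  · rintro u v w (huv | ⟨hua, hbv⟩) (hvw | ⟨hva, hbw⟩)
    · exact Or.inl (_root_.trans huv hvw)
    · exact Or.inr ⟨Or.inr (hva.elim (· ▸ huv) (_root_.trans huv)), hbw⟩
    · exact Or.inr ⟨hua, le_trans hbv (Or.inr hvw)⟩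
    · exact (not_le_ba hbv hva).elim

theorem asymm_of_mem_univDomain {P : Pref X} (hP : P ∈ univDomain X) {a b : X} (h : P a b) :
    ¬ P b a :=
  have : IsStrictTotalOrder X P := hP
  asymm h

theorem trans_of_mem_univDomain {P : Pref X} (hP : P ∈ univDomain X) {a b c : X}
    (hab : P a b) (hbc : P b c) : P a c :=
  have : IsStrictTotalOrder X P := hP
  _root_.trans hab hbc

theorem rel_or_rel_of_mem_univDomain {P : Pref X} (hP : P ∈ univDomain X) {a b : X}
    (hab : a ≠ b) : P a b ∨ P b a :=
  have : IsStrictTotalOrder X P := hP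
  (trichotomous_of P a b).imp_right (·.resolve_left hab)

end Relations

theorem FreePair.symm {X : Type*} {B : Set (Pref X)} {a b : X} (h : FreePair B a b) :
    FreePair B b a :=
  ⟨h.1.symm, h.2.2, h.2.1⟩

namespace NonConditional

variable {X : Type*} {B : Set (Pref X)}

theorem subset_univDomain (hB : NonConditional B) : B ⊆ univDomain X := by
  intro P hP
  rw [hB] at hP
  exact hP.1

theorem mem_of_le (hB : NonConditional B) {P : Pref X} (hP : P ∈ univDomain X)
    (hfix : ∀ a b, (a, b) ∈ fixedPairs B → P a b) : P ∈ B := by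
  rw [hB]
  exact ⟨hP, fun p hp => hfix p.1 p.2 hp⟩

theorem notMem_fixedPairs (hB : NonConditional B) {P : Pref X} (hP : P ∈ B) {a b : X}
    (hba : P b a) : (a, b) ∉ fixedPairs B :=
  fun hab => asymm_of_mem_univDomain (hB.subset_univDomain hP) hba (hab.2 P hP)

theorem isStrictOrder_fixedPairs (hB : NonConditional B) (hne : B.Nonempty) :
    IsStrictOrder X (fun a b => (a, b) ∈ fixedPairs B) where
  irrefl _ h := h.1 rfl
  trans a b c hab hbc := by
    refine ⟨fun hac => ?_, fun P hP =>
      trans_of_mem_univDomain (hB.subset_univDomain hP) (hab.2 P hP) (hbc.2 P hP)⟩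
    obtain ⟨P, hP⟩ := hne
    have hac : a = c := hac
    subst hac
    exact hB.notMem_fixedPairs hP (hbc.2 P hP) hab

theorem exists_mem_le (hB : NonConditional B) {r : X → X → Prop} [IsStrictOrder X r]
    (hr : ∀ a b, (a, b) ∈ fixedPairs B → r a b) : ∃ P ∈ B, r ≤ P := by
  obtain ⟨s, hs, hrs⟩ := exists_isStrictTotalOrder_le r
  exact ⟨s, hB.mem_of_le hs fun a b h => hrs a b (hr a b h), hrs⟩

theorem exists_mem_rel (hB : NonConditional B) (hne : B.Nonempty) {a b : X} (hab : a ≠ b)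
    (hba : (b, a) ∉ fixedPairs B) : ∃ P ∈ B, P a b := by
  let F : X → X → Prop := fun u v => (u, v) ∈ fixedPairs B
  have := hB.isStrictOrder_fixedPairs hne
  have := isStrictOrder_adjoinPair (r := F) hab hba
  obtain ⟨P, hP, hle⟩ := hB.exists_mem_le (r := adjoinPair F a b) fun u v h => Or.inl h
  exact ⟨P, hP, hle a b (Or.inr ⟨Or.inl rfl, Or.inl rfl⟩)⟩

theorem exists_mem_rel_rel (hB : NonConditional B) (hne : B.Nonempty) {a b c : X}
    (hab : a ≠ b) (hbc : b ≠ c) (hac : a ≠ c) (hba : (b, a) ∉ fixedPairs B)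
    (hcb : (c, b) ∉ fixedPairs B) (hca : (c, a) ∉ fixedPairs B) :
    ∃ P ∈ B, P a b ∧ P b c := by
  let F : X → X → Prop := fun u v => (u, v) ∈ fixedPairs B
  have := hB.isStrictOrder_fixedPairs hne
  have := isStrictOrder_adjoinPair (r := F) hab hba
  have := isStrictOrder_adjoinPair (r := adjoinPair F a b) hbc <| by
    rintro (h | ⟨h | h, -⟩)
    exacts [hcb h, hac h.symm, hca h]
  obtain ⟨P, hP, hle⟩ :=
    hB.exists_mem_le (r := adjoinPair (adjoinPair F a b) b c) fun u v h => Or.inl (Or.inl h)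
  exact ⟨P, hP, hle a b (Or.inl (Or.inr ⟨Or.inl rfl, Or.inl rfl⟩)),
    hle b c (Or.inr ⟨Or.inl rfl, Or.inl rfl⟩)⟩

theorem exists_mem_between (hB : NonConditional B) (hne : B.Nonempty) {a b c : X}
    (hab : a ≠ b) (hac : a ≠ c) (hbc : b ≠ c) (hab' : (a, b) ∉ fixedPairs B)
    (hba' : (b, a) ∉ fixedPairs B) :
    ∃ P ∈ B, (P c a ∧ P a b) ∨ (P b a ∧ P a c) := by
  by_cases hac' : (a, c) ∈ fixedPairs B
  · obtain ⟨P, hP, hPba⟩ := hB.exists_mem_rel hne hab.symm hab'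
    exact ⟨P, hP, Or.inr ⟨hPba, hac'.2 P hP⟩⟩
  by_cases hbc' : (b, c) ∈ fixedPairs B
  · obtain ⟨P, hP, hPba, hPac⟩ := hB.exists_mem_rel_rel hne hab.symm hac hbc hab'
      (fun hca => hba' ((hB.isStrictOrder_fixedPairs hne).trans _ _ _ hbc' hca))
      fun hcb => let ⟨P, hP⟩ := hne; hB.notMem_fixedPairs hP (hbc'.2 P hP) hcb
    exact ⟨P, hP, Or.inr ⟨hPba, hPac⟩⟩
  · obtain ⟨P, hP, hPca, hPab⟩ :=
      hB.exists_mem_rel_rel hne hac.symm hab hbc.symm hac' hba' hbc'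
    exact ⟨P, hP, Or.inl ⟨hPca, hPab⟩⟩

end NonConditional

section Profiles

variable {N X : Type*} [DecidableEq N] {𝓡 : N → Set (Pref X)} {f : (N → Pref X) → X}
  {i j : N} {Q R : N → Pref X} {P P' Pj : Pref X}

/-- `Q`, read as the subprofile `Q_{-i}` (its entry at `i` is ignored), lies in the domain. -/
def InDomainExcept (𝓡 : N → Set (Pref X)) (i : N) (Q : N → Pref X) : Prop :=
  ∀ j, j ≠ i → Q j ∈ 𝓡 j

theorem InDomain.update (hR : InDomain 𝓡 R) (hP : P ∈ 𝓡 j) : InDomain 𝓡 (update R j P) := by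
  intro l
  rcases eq_or_ne l j with rfl | hl
  · simpa using hP
  · simpa [update_of_ne hl] using hR l

namespace InDomainExcept

theorem inDomain_update (hQ : InDomainExcept 𝓡 i Q) (hP : P ∈ 𝓡 i) :
    InDomain 𝓡 (update Q i P) := by
  intro l
  rcases eq_or_ne l i with rfl | hl
  · simpa using hP
  · simpa [update_of_ne hl] using hQ l hl

theorem update (hQ : InDomainExcept 𝓡 i Q) (hP : P ∈ 𝓡 j) :
    InDomainExcept 𝓡 i (update Q j P) := by
  intro l hl
  rcases eq_or_ne l j with rfl | hlj
  · simpa using hP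
  · simpa [update_of_ne hlj] using hQ l hl

end InDomainExcept

theorem optionSet_mono {B B' : Set (Pref X)} (h : B ⊆ B') :
    optionSet f i Q B ⊆ optionSet f i Q B' := by
  rintro _ ⟨P, hP, rfl⟩
  exact ⟨P, h hP, rfl⟩

theorem optionSet_subset_scrRange (hQ : InDomainExcept 𝓡 i Q) :
    optionSet f i Q (𝓡 i) ⊆ scrRange 𝓡 f := by
  rintro _ ⟨P, hP, rfl⟩
  exact ⟨_, hQ.inDomain_update hP, rfl⟩

theorem diffAgents_update_left (i j : N) (S : Set X) (R R' : N → Pref X) :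
    diffAgents i S (update R j (R' j)) R' = diffAgents i S R R' \ {j} := by
  ext l
  rcases eq_or_ne l j with rfl | hlj
  · simp [diffAgents]
  · simp [diffAgents, hlj]

theorem diffAgents_update_right (i j : N) (S : Set X) (R R' : N → Pref X) :
    diffAgents i S R (update R' j (R j)) = diffAgents i S R R' \ {j} := by
  ext l
  rcases eq_or_ne l j with rfl | hlj
  · simp [diffAgents]
  · simp [diffAgents, hlj]

namespace StrategyProof

theorem eq_or_rel_rel (hSP : StrategyProof 𝓡 f) (hj : 𝓡 j ⊆ univDomain X) (hR : InDomain 𝓡 R)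
    (hP : P ∈ 𝓡 j) :
    f R = f (update R j P) ∨ (R j (f R) (f (update R j P)) ∧ P (f (update R j P)) (f R)) := by
  have h₁ := hSP R hR j P hP
  have h₂ := hSP _ (hR.update hP) j (R j) (hR j)
  rw [update_idem, update_eq_self, update_self] at h₂
  by_cases heq : f R = f (update R j P)
  · exact Or.inl heq
  · exact Or.inr ⟨(rel_or_rel_of_mem_univDomain (hj (hR j)) heq).resolve_right h₁,
      (rel_or_rel_of_mem_univDomain (hj hP) (Ne.symm heq)).resolve_right h₂⟩

theorem not_rel (hSP : StrategyProof 𝓡 f) (hQ : InDomainExcept 𝓡 i Q) (hP : P ∈ 𝓡 i)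
    (hP' : P' ∈ 𝓡 i) : ¬ P (f (update Q i P')) (f (update Q i P)) := by
  simpa using hSP _ (hQ.inDomain_update hP) i P' hP'

theorem rel_of_mem_optionSet (hSP : StrategyProof 𝓡 f) (hi : 𝓡 i ⊆ univDomain X)
    (hQ : InDomainExcept 𝓡 i Q) (hP : P ∈ 𝓡 i) {a : X} (ha : a ∈ optionSet f i Q (𝓡 i))
    (hne : f (update Q i P) ≠ a) : P (f (update Q i P)) a := by
  obtain ⟨P', hP', rfl⟩ := ha
  exact (rel_or_rel_of_mem_univDomain (hi hP) hne).resolve_right (hSP.not_rel hQ hP hP')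

theorem eq_of_forall_rel (hSP : StrategyProof 𝓡 f) (hi : 𝓡 i ⊆ univDomain X)
    (hQ : InDomainExcept 𝓡 i Q) (hP : P ∈ 𝓡 i) {a : X} (ha : a ∈ optionSet f i Q (𝓡 i))
    (htop : ∀ b ∈ optionSet f i Q (𝓡 i), b ≠ a → P a b) : f (update Q i P) = a := by
  by_contra hne
  exact asymm_of_mem_univDomain (hi hP) (hSP.rel_of_mem_optionSet hi hQ hP ha hne)
    (htop _ ⟨P, hP, rfl⟩ hne)

theorem eq_of_optionSet_eq_pair (hSP : StrategyProof 𝓡 f) (hi : 𝓡 i ⊆ univDomain X)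
    (hQ : InDomainExcept 𝓡 i Q) (hP : P ∈ 𝓡 i) {a b : X}
    (hW : optionSet f i Q (𝓡 i) = {a, b}) (hab : P a b) : f (update Q i P) = a := by
  refine hSP.eq_of_forall_rel hi hQ hP (hW ▸ Set.mem_insert a {b}) fun c hc hca => ?_
  rw [hW] at hc
  rcases hc with rfl | rfl
  exacts [(hca rfl).elim, hab]

theorem notMem_fixedPairs_of_mem_optionSet (hSP : StrategyProof 𝓡 f)
    (hi : NonConditional (𝓡 i)) (hQ : InDomainExcept 𝓡 i Q) {a b : X}
    (ha : a ∈ optionSet f i Q (𝓡 i)) (hb : b ∈ optionSet f i Q (𝓡 i)) (hab : a ≠ b) :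
    (a, b) ∉ fixedPairs (𝓡 i) := by
  obtain ⟨P, hP, rfl⟩ := hb
  exact hi.notMem_fixedPairs hP
    (hSP.rel_of_mem_optionSet hi.subset_univDomain hQ hP ha (Ne.symm hab))

theorem eq_or_rel_rel_of_ne (hSP : StrategyProof 𝓡 f) (hj : 𝓡 j ⊆ univDomain X) (hji : j ≠ i)
    (hQ : InDomainExcept 𝓡 i Q) (hPj : Pj ∈ 𝓡 j) (hP : P ∈ 𝓡 i) :
    f (update Q i P) = f (update (update Q j Pj) i P) ∨
      (Q j (f (update Q i P)) (f (update (update Q j Pj) i P)) ∧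
        Pj (f (update (update Q j Pj) i P)) (f (update Q i P))) := by
  have h := hSP.eq_or_rel_rel hj (hQ.inDomain_update hP) hPj
  rwa [update_comm hji.symm, update_of_ne hji] at h

theorem freePair_of_ne (hSP : StrategyProof 𝓡 f) (hj : NonConditional (𝓡 j)) (hji : j ≠ i)
    (hQ : InDomainExcept 𝓡 i Q) (hPj : Pj ∈ 𝓡 j) (hP : P ∈ 𝓡 i)
    (hne : f (update Q i P) ≠ f (update (update Q j Pj) i P)) :
    FreePair (𝓡 j) (f (update Q i P)) (f (update (update Q j Pj) i P)) := by
  obtain ⟨h₁, h₂⟩ :=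
    (hSP.eq_or_rel_rel_of_ne hj.subset_univDomain hji hQ hPj hP).resolve_left hne
  exact ⟨hne, hj.notMem_fixedPairs hPj h₂, hj.notMem_fixedPairs (hQ j hji) h₁⟩

theorem eq_of_forall_rel_of_ne (hSP : StrategyProof 𝓡 f) (hj : 𝓡 j ⊆ univDomain X)
    (hji : j ≠ i) (hQ : InDomainExcept 𝓡 i Q) (hPj : Pj ∈ 𝓡 j) (hP : P ∈ 𝓡 i)
    (htop : ∀ w ∈ scrRange 𝓡 f, w ≠ f (update Q i P) → Pj (f (update Q i P)) w) :
    f (update (update Q j Pj) i P) = f (update Q i P) := by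
  rcases hSP.eq_or_rel_rel_of_ne hj hji hQ hPj hP with h | ⟨-, h⟩
  · exact h.symm
  by_contra hne
  exact asymm_of_mem_univDomain (hj hPj) h
    (htop _ ⟨_, (hQ.update hPj).inDomain_update hP, rfl⟩ hne)

theorem notMem_fixedPairs_of_swap (hSP : StrategyProof 𝓡 f) (hj : NonConditional (𝓡 j))
    (hji : j ≠ i) (hQ : InDomainExcept 𝓡 i Q) (hPj : Pj ∈ 𝓡 j) {a b c : X} (hab : a ≠ b)
    (hac : a ≠ c) (hbc : b ≠ c) (hrange : scrRange 𝓡 f ⊆ {a, b, c}) {Pa Pb : Pref X}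
    (hPa : Pa ∈ 𝓡 i) (hPb : Pb ∈ 𝓡 i) (ha : f (update Q i Pa) = a) (hb : f (update Q i Pb) = b)
    (hca : f (update (update Q j Pj) i Pa) = c) (hcb : f (update (update Q j Pj) i Pb) = c)
    (hpref : Pa c a ∨ Pb a c) : (a, b) ∉ fixedPairs (𝓡 j) := by
  intro hfix
  have hjU := hj.subset_univDomain
  have hQj : Q j ∈ 𝓡 j := hQ j hji
  have hQjac : Q j a c := by
    have h := hSP.eq_or_rel_rel_of_ne hjU hji hQ hPj hPa
    rw [ha, hca] at h
    exact (h.resolve_left hac).1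
  have hPjcb : Pj c b := by
    have h := hSP.eq_or_rel_rel_of_ne hjU hji hQ hPj hPb
    rw [hb, hcb] at h
    exact (h.resolve_left hbc).2
  obtain ⟨Pr, hPr, hPrac, hPrcb⟩ := hj.exists_mem_rel_rel ⟨_, hQj⟩ hac hbc.symm hab
    (hj.notMem_fixedPairs hQj hQjac) (hj.notMem_fixedPairs hPj hPjcb)
    (hj.notMem_fixedPairs hQj (hfix.2 _ hQj))
  have hQr := hQ.update hPr
  have hra : f (update (update Q j Pr) i Pa) = a := by
    refine (hSP.eq_of_forall_rel_of_ne hjU hji hQ hPr hPa fun w hw hwa => ?_).trans ha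
    rw [ha] at hwa ⊢
    rcases hrange hw with rfl | rfl | rfl
    exacts [(hwa rfl).elim, trans_of_mem_univDomain (hjU hPr) hPrac hPrcb, hPrac]
  -- Moving from `Pj` to `Pr` could only lift `c` to `a` at `Pb`; moving from `Q j` to `Pr`
  -- could only produce `a` if `Q j` ranked `b` above `a`.
  have hrb : f (update (update Q j Pr) i Pb) = c := by
    have h₁ := hSP.eq_or_rel_rel_of_ne hjU hji (hQ.update hPj) hPr hPb
    rw [update_idem, update_self, hcb] at h₁
    rcases h₁ with h₁ | ⟨-, h₁⟩
    · exact h₁.symm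
    rcases hrange ⟨_, hQr.inDomain_update hPb, rfl⟩ with h' | h' | h'
    · rcases hSP.eq_or_rel_rel_of_ne hjU hji hQ hPr hPb with h₂ | ⟨h₂, -⟩
      · rw [hb, h'] at h₂
        exact (hab h₂.symm).elim
      · rw [hb, h'] at h₂
        exact (asymm_of_mem_univDomain (hjU hQj) h₂ (hfix.2 _ hQj)).elim
    · rw [h'] at h₁
      exact (asymm_of_mem_univDomain (hjU hPr) h₁ hPrcb).elim
    · exact h'
  rcases hpref with h | h
  · exact hSP.not_rel hQr hPa hPb (by rwa [hra, hrb])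
  · exact hSP.not_rel hQr hPb hPa (by rwa [hra, hrb])

theorem freePair_of_top (hSP : StrategyProof 𝓡 f) (hi : NonConditional (𝓡 i))
    (hj : NonConditional (𝓡 j)) (hji : j ≠ i) (hQ : InDomainExcept 𝓡 i Q) (hPj : Pj ∈ 𝓡 j)
    {a b c : X} (hab : a ≠ b) (hac : a ≠ c) (hbc : b ≠ c) (hrange : scrRange 𝓡 f ⊆ {a, b, c})
    (hW : optionSet f i Q (𝓡 i) = {a, b}) (hc : c ∈ optionSet f i (update Q j Pj) (𝓡 i))
    (hab' : (a, b) ∉ fixedPairs (𝓡 i)) (hba' : (b, a) ∉ fixedPairs (𝓡 i))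
    (hac' : (a, c) ∉ fixedPairs (𝓡 i)) (hbc' : (b, c) ∉ fixedPairs (𝓡 i)) :
    FreePair (𝓡 j) a b := by
  have hne : (𝓡 i).Nonempty := let ⟨P, hP, _⟩ := hc; ⟨P, hP⟩
  have hQ' := hQ.update hPj
  obtain ⟨Pa, hPa, hPaca, hPaab⟩ :=
    hi.exists_mem_rel_rel hne hac.symm hab hbc.symm hac' hba' hbc'
  obtain ⟨Pb, hPb, hPbcb, hPbba⟩ :=
    hi.exists_mem_rel_rel hne hbc.symm hab.symm hac.symm hbc' hab' hac'
  have htop : ∀ {P}, P ∈ 𝓡 i → P c a → P c b → f (update (update Q j Pj) i P) = c :=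
    fun hP hca hcb => hSP.eq_of_forall_rel hi.subset_univDomain hQ' hP hc fun w hw hwc => by
      rcases hrange (optionSet_subset_scrRange hQ' hw) with rfl | rfl | rfl
      exacts [hca, hcb, (hwc rfl).elim]
  have hPi := hi.subset_univDomain
  have ha := hSP.eq_of_optionSet_eq_pair hPi hQ hPa hW hPaab
  have hb := hSP.eq_of_optionSet_eq_pair hPi hQ hPb (hW.trans (Set.pair_comm a b)) hPbba
  have hca := htop hPa hPaca (trans_of_mem_univDomain (hPi hPa) hPaca hPaab)
  have hcb := htop hPb (trans_of_mem_univDomain (hPi hPb) hPbcb hPbba) hPbcb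
  exact ⟨hab, hSP.notMem_fixedPairs_of_swap hj hji hQ hPj hab hac hbc hrange hPa hPb ha hb
    hca hcb (Or.inl hPaca), hSP.notMem_fixedPairs_of_swap hj hji hQ hPj hab.symm hbc hac
    (Set.insert_comm a b {c} ▸ hrange) hPb hPa hb ha hcb hca (Or.inl hPbcb)⟩

theorem notMem_fixedPairs_of_optionSet_eq_singleton (hSP : StrategyProof 𝓡 f)
    (hi : NonConditional (𝓡 i)) (hj : NonConditional (𝓡 j)) (hji : j ≠ i)
    (hQ : InDomainExcept 𝓡 i Q) (hPj : Pj ∈ 𝓡 j) {a b c : X} (hab : a ≠ b) (hac : a ≠ c)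
    (hbc : b ≠ c) (hrange : scrRange 𝓡 f ⊆ {a, b, c}) (hW : optionSet f i Q (𝓡 i) = {a, b})
    (hW' : optionSet f i (update Q j Pj) (𝓡 i) = {c}) (hab' : (a, b) ∉ fixedPairs (𝓡 i))
    (hba' : (b, a) ∉ fixedPairs (𝓡 i)) : (a, b) ∉ fixedPairs (𝓡 j) := by
  have hne : (𝓡 i).Nonempty :=
    let ⟨P, hP, _⟩ := (hW ▸ Set.mem_insert a {b} : a ∈ optionSet f i Q (𝓡 i)); ⟨P, hP⟩
  have hc : ∀ {P}, P ∈ 𝓡 i → f (update (update Q j Pj) i P) = c := fun hP =>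
    (hW' ▸ ⟨_, hP, rfl⟩ : _ ∈ ({c} : Set X))
  have hfa : ∀ {P}, P ∈ 𝓡 i → P a b → f (update Q i P) = a := fun hP =>
    hSP.eq_of_optionSet_eq_pair hi.subset_univDomain hQ hP hW
  have hfb : ∀ {P}, P ∈ 𝓡 i → P b a → f (update Q i P) = b := fun hP =>
    hSP.eq_of_optionSet_eq_pair hi.subset_univDomain hQ hP (hW.trans (Set.pair_comm a b))
  obtain ⟨P, hP, ⟨hPca, hPab⟩ | ⟨hPba, hPac⟩⟩ := hi.exists_mem_between hne hab hac hbc hab' hba'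
  · obtain ⟨Pb, hPb, hPbba⟩ := hi.exists_mem_rel hne hab.symm hab'
    exact hSP.notMem_fixedPairs_of_swap hj hji hQ hPj hab hac hbc hrange hP hPb (hfa hP hPab)
      (hfb hPb hPbba) (hc hP) (hc hPb) (Or.inl hPca)
  · obtain ⟨Pa, hPa, hPaab⟩ := hi.exists_mem_rel hne hab hba'
    exact hSP.notMem_fixedPairs_of_swap hj hji hQ hPj hab hac hbc hrange hPa hP (hfa hPa hPaab)
      (hfb hP hPba) (hc hPa) (hc hP) (Or.inr hPac)

end StrategyProof

end Profiles

section Part3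

variable {N X : Type*} [DecidableEq N]

/-- Condition (a) of the statement, at the subprofile `Q`. -/
structure CondA (f : (N → Pref X) → X) (i : N) (𝓡 𝓡' : N → Set (Pref X)) (x y : X)
    (Q : N → Pref X) : Prop where
  optionSet'_eq : optionSet f i Q (𝓡' i) = {x}
  optionSet_eq : optionSet f i Q (𝓡 i) = {x, y}

/-- Condition (b) of the statement, at the subprofile `Q`. -/
structure CondB (f : (N → Pref X) → X) (i : N) (𝓡 𝓡' : N → Set (Pref X)) (x z : X)
    (Q : N → Pref X) : Prop where
  optionSet'_eq : optionSet f i Q (𝓡' i) = optionSet f i Q (𝓡 i)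
  optionSet_eq : optionSet f i Q (𝓡 i) = {z} ∨ optionSet f i Q (𝓡 i) = {x, z}

/-- The PART 3 setup of the statement. -/
structure Part3Setup (i : N) (𝓡 𝓡' : N → Set (Pref X)) (f : (N → Pref X) → X) (x y z : X) :
    Prop where
  agree : ∀ j, j ≠ i → 𝓡' j = 𝓡 j
  nonConditional : ∀ j, NonConditional (𝓡 j)
  nonConditional' : NonConditional (𝓡' i)
  subset : 𝓡' i ⊆ 𝓡 i
  nonempty : (𝓡' i).Nonempty
  mem_fixedPairs : (x, y) ∈ fixedPairs (𝓡' i)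
  fixedPairs_eq : fixedPairs (𝓡 i) = fixedPairs (𝓡' i) \ {(x, y)}
  strategyProof : StrategyProof 𝓡 f
  z_ne_x : z ≠ x
  z_ne_y : z ≠ y
  range_subset' : scrRange 𝓡' f ⊆ {x, z}
  range_subset : scrRange 𝓡 f ⊆ {x, y, z}

namespace Part3Setup

variable {i j : N} {𝓡 𝓡' : N → Set (Pref X)} {f : (N → Pref X) → X} {x y z : X}
  {Q : N → Pref X} {Pj : Pref X}

theorem x_ne_y (hs : Part3Setup i 𝓡 𝓡' f x y z) : x ≠ y := hs.mem_fixedPairs.1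

theorem mem_fixedPairs_of_mem_fixedPairs' (hs : Part3Setup i 𝓡 𝓡' f x y z) {a b : X}
    (h : (a, b) ∈ fixedPairs (𝓡' i)) (hne : a ≠ x ∨ b ≠ y) : (a, b) ∈ fixedPairs (𝓡 i) := by
  rw [hs.fixedPairs_eq]
  refine ⟨h, fun hxy => ?_⟩
  obtain ⟨rfl, rfl⟩ := Prod.mk.inj hxy
  exact hne.elim (· rfl) (· rfl)

theorem fixedPairs_subset (hs : Part3Setup i 𝓡 𝓡' f x y z) :
    fixedPairs (𝓡 i) ⊆ fixedPairs (𝓡' i) :=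
  hs.fixedPairs_eq ▸ Set.sdiff_subset

theorem notMem_fixedPairs_x_y (hs : Part3Setup i 𝓡 𝓡' f x y z) :
    (x, y) ∉ fixedPairs (𝓡 i) := by
  rw [hs.fixedPairs_eq]
  exact fun h => h.2 rfl

theorem notMem_fixedPairs_y_x (hs : Part3Setup i 𝓡 𝓡' f x y z) :
    (y, x) ∉ fixedPairs (𝓡 i) := fun h =>
  let ⟨P, hP⟩ := hs.nonempty
  hs.nonConditional'.notMem_fixedPairs hP (hs.mem_fixedPairs.2 P hP) (hs.fixedPairs_subset h)

theorem mem_fixedPairs_x_of_mem_fixedPairs_y (hs : Part3Setup i 𝓡 𝓡' f x y z) {a : X}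
    (h : (y, a) ∈ fixedPairs (𝓡 i)) : (x, a) ∈ fixedPairs (𝓡 i) :=
  hs.mem_fixedPairs_of_mem_fixedPairs'
    ((hs.nonConditional'.isStrictOrder_fixedPairs hs.nonempty).trans _ _ _ hs.mem_fixedPairs
      (hs.fixedPairs_subset h)) (Or.inr (Ne.symm h.1))

theorem optionSet_subset (hs : Part3Setup i 𝓡 𝓡' f x y z) (hQ : InDomainExcept 𝓡 i Q) :
    optionSet f i Q (𝓡 i) ⊆ {x, y, z} :=
  (optionSet_subset_scrRange hQ).trans hs.range_subset

theorem optionSet'_subset (hs : Part3Setup i 𝓡 𝓡' f x y z) (hQ : InDomainExcept 𝓡 i Q) :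
    optionSet f i Q (𝓡' i) ⊆ {x, z} := by
  rintro _ ⟨P, hP, rfl⟩
  refine hs.range_subset' ⟨_, fun l => ?_, rfl⟩
  rcases eq_or_ne l i with rfl | hl
  · simpa using hP
  · simpa [update_of_ne hl, hs.agree l hl] using hQ l hl

theorem optionSet'_nonempty (hs : Part3Setup i 𝓡 𝓡' f x y z) :
    (optionSet f i Q (𝓡' i)).Nonempty :=
  let ⟨P, hP⟩ := hs.nonempty
  ⟨_, P, hP, rfl⟩

theorem mem_optionSet'_of_mem_optionSet (hs : Part3Setup i 𝓡 𝓡' f x y z)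
    (hQ : InDomainExcept 𝓡 i Q) {a : X} (ha : a ∈ optionSet f i Q (𝓡 i)) (hay : a ≠ y) :
    a ∈ optionSet f i Q (𝓡' i) := by
  by_contra haV
  obtain ⟨P₀, hP₀⟩ := hs.nonempty
  have hbV : f (update Q i P₀) ∈ optionSet f i Q (𝓡' i) := ⟨P₀, hP₀, rfl⟩
  have hba : f (update Q i P₀) ≠ a := fun h => haV (h ▸ hbV)
  have hxz : a ∈ ({x, z} : Set X) := by
    rcases hs.optionSet_subset hQ ha with h | h | h
    exacts [Or.inl h, (hay h).elim, Or.inr h]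
  -- Every preference of the restricted domain picks the other element of `{x, z}`.
  have hfix : (f (update Q i P₀), a) ∈ fixedPairs (𝓡' i) := by
    refine ⟨hba, fun P hP => ?_⟩
    have hPa : f (update Q i P) ≠ a := fun h => haV ⟨P, hP, h⟩
    have hP₀P : f (update Q i P) = f (update Q i P₀) := by
      rcases hs.optionSet'_subset hQ ⟨P, hP, rfl⟩ with h | h <;>
        rcases hs.optionSet'_subset hQ hbV with h' | h' <;>
          rcases hxz with rfl | rfl <;> simp_all
    exact hP₀P ▸ hs.strategyProof.rel_of_mem_optionSet (hs.nonConditional i).subset_univDomain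
      hQ (hs.subset hP) ha hPa
  exact hs.strategyProof.notMem_fixedPairs_of_mem_optionSet (hs.nonConditional i) hQ
    (optionSet_mono hs.subset hbV) ha hba (hs.mem_fixedPairs_of_mem_fixedPairs' hfix (Or.inr hay))

theorem x_mem_optionSet (hs : Part3Setup i 𝓡 𝓡' f x y z) (hQ : InDomainExcept 𝓡 i Q)
    (hy : y ∈ optionSet f i Q (𝓡 i)) (hz : z ∈ optionSet f i Q (𝓡 i)) :
    x ∈ optionSet f i Q (𝓡 i) := by
  have hzy : (z, y) ∉ fixedPairs (𝓡' i) := fun h =>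
    hs.strategyProof.notMem_fixedPairs_of_mem_optionSet (hs.nonConditional i) hQ hz hy hs.z_ne_y
      (hs.mem_fixedPairs_of_mem_fixedPairs' h (Or.inl hs.z_ne_x))
  obtain ⟨P, hP, hPyz⟩ := hs.nonConditional'.exists_mem_rel hs.nonempty hs.z_ne_y.symm hzy
  refine ⟨P, hs.subset hP, ?_⟩
  rcases hs.optionSet'_subset hQ ⟨P, hP, rfl⟩ with h | h
  · exact h
  · have := hs.strategyProof.rel_of_mem_optionSet (hs.nonConditional i).subset_univDomain hQ
      (hs.subset hP) hy (h ▸ hs.z_ne_y)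
    rw [h] at this
    exact (asymm_of_mem_univDomain (hs.nonConditional'.subset_univDomain hP) hPyz this).elim

theorem condA_of (hs : Part3Setup i 𝓡 𝓡' f x y z) (hQ : InDomainExcept 𝓡 i Q)
    (hy : y ∈ optionSet f i Q (𝓡 i)) (hz : z ∉ optionSet f i Q (𝓡 i)) :
    CondA f i 𝓡 𝓡' x y Q := by
  have hV : optionSet f i Q (𝓡' i) = {x} := by
    refine (Set.Nonempty.subset_singleton_iff hs.optionSet'_nonempty).1 fun a ha => ?_
    rcases hs.optionSet'_subset hQ ha with h | h
    · exact h
    · exact (hz (h ▸ optionSet_mono hs.subset ha)).elim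
  refine ⟨hV, Set.Subset.antisymm (fun a ha => ?_) ?_⟩
  · rcases hs.optionSet_subset hQ ha with h | h | h
    exacts [Or.inl h, Or.inr h, (hz (h ▸ ha)).elim]
  · rintro a (rfl | rfl)
    exacts [optionSet_mono hs.subset (hV ▸ rfl), hy]

theorem condB_of (hs : Part3Setup i 𝓡 𝓡' f x y z) (hQ : InDomainExcept 𝓡 i Q)
    (hy : y ∉ optionSet f i Q (𝓡 i)) (hz : z ∈ optionSet f i Q (𝓡 i)) :
    CondB f i 𝓡 𝓡' x z Q := by
  refine ⟨Set.Subset.antisymm (optionSet_mono hs.subset)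
    fun a ha => hs.mem_optionSet'_of_mem_optionSet hQ ha (fun h => hy (h ▸ ha)), ?_⟩
  have hsub : optionSet f i Q (𝓡 i) ⊆ {x, z} := fun a ha => by
    rcases hs.optionSet_subset hQ ha with h | h | h
    exacts [Or.inl h, (hy (h ▸ ha)).elim, Or.inr h]
  by_cases hx : x ∈ optionSet f i Q (𝓡 i)
  · exact Or.inr (Set.Subset.antisymm hsub (Set.insert_subset hx (Set.singleton_subset_iff.2 hz)))
  · refine Or.inl (Set.Subset.antisymm (fun a ha => ?_) (Set.singleton_subset_iff.2 hz))
    rcases hsub ha with h | h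
    exacts [(hx (h ▸ ha)).elim, h]

theorem freePair_x_z_of_condB (hs : Part3Setup i 𝓡 𝓡' f x y z) (hQ : InDomainExcept 𝓡 i Q)
    (hji : j ≠ i) (hPj : Pj ∈ 𝓡 j) (hB : CondB f i 𝓡 𝓡' x z Q)
    (hB' : ¬ CondB f i 𝓡 𝓡' x z (update Q j Pj)) : FreePair (𝓡 j) x z := by
  by_contra hfree
  have hSP := hs.strategyProof
  have hQ' := hQ.update hPj
  -- With `{x, z}` fixed for `j`, her move cannot change any outcome on the restricted domain.
  have hV : ∀ P ∈ 𝓡' i, f (update (update Q j Pj) i P) = f (update Q i P) := by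
    intro P hP
    by_contra hne
    have h := hSP.freePair_of_ne (hs.nonConditional j) hji hQ hPj (hs.subset hP) (Ne.symm hne)
    rcases hs.optionSet'_subset hQ ⟨P, hP, rfl⟩ with h₁ | h₁ <;>
      rcases hs.optionSet'_subset hQ' ⟨P, hP, rfl⟩ with h₂ | h₂ <;> rw [h₁, h₂] at h
    exacts [h.1 rfl, hfree h, hfree h.symm, h.1 rfl]
  have hV' : optionSet f i Q (𝓡' i) ⊆ optionSet f i (update Q j Pj) (𝓡' i) := by
    rintro _ ⟨P, hP, rfl⟩
    exact ⟨P, hP, hV P hP⟩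
  have hzW : z ∈ optionSet f i Q (𝓡 i) := by
    rcases hB.optionSet_eq with h | h <;> rw [h]
    exacts [rfl, Or.inr rfl]
  have hzW' : z ∈ optionSet f i (update Q j Pj) (𝓡 i) :=
    optionSet_mono hs.subset (hV' (hB.optionSet'_eq ▸ hzW))
  have hyW' : y ∈ optionSet f i (update Q j Pj) (𝓡 i) :=
    by_contra fun hy => hB' (hs.condB_of hQ' hy hzW')
  have hxW : x ∈ optionSet f i Q (𝓡 i) := by
    obtain ⟨P, hP, hPx⟩ := hs.mem_optionSet'_of_mem_optionSet hQ'
      (hs.x_mem_optionSet hQ' hyW' hzW') hs.x_ne_y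
    exact ⟨P, hs.subset hP, (hV P hP).symm.trans hPx⟩
  have hW : optionSet f i Q (𝓡 i) = {x, z} :=
    hB.optionSet_eq.resolve_left fun h => hs.z_ne_x (by rw [h] at hxW; exact hxW.symm)
  have hxz := hSP.notMem_fixedPairs_of_mem_optionSet (hs.nonConditional i) hQ hxW hzW
    hs.z_ne_x.symm
  have hzx := hSP.notMem_fixedPairs_of_mem_optionSet (hs.nonConditional i) hQ hzW hxW hs.z_ne_x
  have hzy := hSP.notMem_fixedPairs_of_mem_optionSet (hs.nonConditional i) hQ' hzW' hyW'
    hs.z_ne_y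
  exact hfree (hSP.freePair_of_top (hs.nonConditional i) (hs.nonConditional j) hji hQ hPj
    hs.z_ne_x.symm hs.x_ne_y hs.z_ne_y (Set.pair_comm y z ▸ hs.range_subset) hW hyW' hxz hzx
    hs.notMem_fixedPairs_x_y hzy)

theorem freePair_x_y_of_condA (hs : Part3Setup i 𝓡 𝓡' f x y z) (hQ : InDomainExcept 𝓡 i Q)
    (hji : j ≠ i) (hPj : Pj ∈ 𝓡 j) (hA : CondA f i 𝓡 𝓡' x y Q)
    (hA' : ¬ CondA f i 𝓡 𝓡' x y (update Q j Pj)) : FreePair (𝓡 j) x y := by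
  have hSP := hs.strategyProof
  have hQ' := hQ.update hPj
  have hi := hs.nonConditional i
  by_cases hz : z ∈ optionSet f i (update Q j Pj) (𝓡 i)
  · by_cases hx : x ∈ optionSet f i (update Q j Pj) (𝓡 i)
    · have hxz := hSP.notMem_fixedPairs_of_mem_optionSet hi hQ' hx hz hs.z_ne_x.symm
      exact hSP.freePair_of_top hi (hs.nonConditional j) hji hQ hPj hs.x_ne_y hs.z_ne_x.symm
        hs.z_ne_y.symm hs.range_subset hA.optionSet_eq hz hs.notMem_fixedPairs_x_y
        hs.notMem_fixedPairs_y_x hxz (fun h => hxz (hs.mem_fixedPairs_x_of_mem_fixedPairs_y h))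
    · have hW' : optionSet f i (update Q j Pj) (𝓡 i) = {z} := by
        refine Set.Subset.antisymm (fun a ha => ?_) (Set.singleton_subset_iff.2 hz)
        rcases hs.optionSet_subset hQ' ha with rfl | rfl | h
        exacts [(hx ha).elim, (hx (hs.x_mem_optionSet hQ' ha hz)).elim, h]
      exact ⟨hs.x_ne_y,
        hSP.notMem_fixedPairs_of_optionSet_eq_singleton hi (hs.nonConditional j) hji hQ hPj
          hs.x_ne_y hs.z_ne_x.symm hs.z_ne_y.symm hs.range_subset hA.optionSet_eq hW'
          hs.notMem_fixedPairs_x_y hs.notMem_fixedPairs_y_x,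
        hSP.notMem_fixedPairs_of_optionSet_eq_singleton hi (hs.nonConditional j) hji hQ hPj
          hs.x_ne_y.symm hs.z_ne_y.symm hs.z_ne_x.symm
          (Set.insert_comm x y {z} ▸ hs.range_subset) (hA.optionSet_eq.trans (Set.pair_comm x y))
          hW' hs.notMem_fixedPairs_y_x hs.notMem_fixedPairs_x_y⟩
  · obtain ⟨P, hP, hPyx⟩ := hi.exists_mem_rel (hs.nonempty.mono hs.subset) hs.x_ne_y.symm
      hs.notMem_fixedPairs_x_y
    have hy : f (update Q i P) = y := hSP.eq_of_optionSet_eq_pair hi.subset_univDomain hQ hP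
      (hA.optionSet_eq.trans (Set.pair_comm x y)) hPyx
    have hx : f (update (update Q j Pj) i P) = x := by
      rcases hs.optionSet_subset hQ' ⟨P, hP, rfl⟩ with h | h | h
      · exact h
      · exact (hA' (hs.condA_of hQ' (h ▸ ⟨P, hP, rfl⟩) hz)).elim
      · exact (hz (h ▸ ⟨P, hP, rfl⟩)).elim
    have h := hSP.freePair_of_ne (hs.nonConditional j) hji hQ hPj hP
      (by rw [hy, hx]; exact hs.x_ne_y.symm)
    rw [hy, hx] at h
    exact h.symm

end Part3Setup

end Part3

theorem statement16_general {N X : Type*} [Fintype N] [DecidableEq N]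
    (i : N) (𝓡 𝓡' : N → Set (Pref X))
    (hAgree : ∀ j, j ≠ i → 𝓡' j = 𝓡 j)
    (hNC : ∀ j, NonConditional (𝓡 j)) (hNC' : NonConditional (𝓡' i))
    (hss : 𝓡' i ⊂ 𝓡 i) (x y : X)
    (hxy : (x, y) ∈ fixedPairs (𝓡' i))
    (hS : fixedPairs (𝓡 i) = fixedPairs (𝓡' i) \ {(x, y)})
    (f : (N → Pref X) → X) (hSP : StrategyProof 𝓡 f)
    (z : X) (hzx : z ≠ x) (hzy : z ≠ y)
    (hrange' : scrRange 𝓡' f = {x, z})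
    (hrange : scrRange 𝓡 f = {x, y, z})
    (Rbar Rhat : N → Pref X)
    (hRbar : ∀ j, j ≠ i → Rbar j ∈ 𝓡 j) (hRhat : ∀ j, j ≠ i → Rhat j ∈ 𝓡 j)
    (ha1 : optionSet f i Rbar (𝓡' i) = {x})
    (ha2 : optionSet f i Rbar (𝓡 i) = {x, y})
    (hb1 : optionSet f i Rhat (𝓡' i) = optionSet f i Rhat (𝓡 i))
    (hb2 : optionSet f i Rhat (𝓡 i) = {z} ∨ optionSet f i Rhat (𝓡 i) = {x, z})
    (hc : ∀ Rbar' Rhat' : N → Pref X,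
      (∀ j, j ≠ i → Rbar' j ∈ 𝓡 j) → (∀ j, j ≠ i → Rhat' j ∈ 𝓡 j) →
      optionSet f i Rbar' (𝓡' i) = {x} → optionSet f i Rbar' (𝓡 i) = {x, y} →
      optionSet f i Rhat' (𝓡' i) = optionSet f i Rhat' (𝓡 i) →
      (optionSet f i Rhat' (𝓡 i) = {z} ∨ optionSet f i Rhat' (𝓡 i) = {x, z}) →
      (diffAgents i (scrRange 𝓡 f) Rbar Rhat).ncard ≤
        (diffAgents i (scrRange 𝓡 f) Rbar' Rhat').ncard) :
    ∀ j ∈ diffAgents i (scrRange 𝓡 f) Rbar Rhat,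
      FreePair (𝓡 j) x y ∧ FreePair (𝓡 j) x z := by
  intro j hj
  have hji : j ≠ i := hj.1
  obtain ⟨P, hP, -⟩ : x ∈ optionSet f i Rbar (𝓡' i) := ha1 ▸ rfl
  have hs : Part3Setup i 𝓡 𝓡' f x y z :=
    ⟨hAgree, hNC, hNC', hss.subset, ⟨P, hP⟩, hxy, hS, hSP, hzx, hzy, hrange'.subset,
      hrange.subset⟩
  have hlt := Set.ncard_sdiff_singleton_lt_of_mem hj (Set.toFinite _)
  refine ⟨hs.freePair_x_y_of_condA hRbar hji (hRhat j hji) ⟨ha1, ha2⟩ fun hA => ?_,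
    hs.freePair_x_z_of_condB hRhat hji (hRbar j hji) ⟨hb1, hb2⟩ fun hB => ?_⟩
  · have h := hc _ Rhat (InDomainExcept.update hRbar (hRhat j hji)) hRhat hA.1 hA.2 hb1 hb2
    rw [diffAgents_update_left] at h
    omega
  · have h := hc Rbar _ hRbar (InDomainExcept.update hRhat (hRbar j hji)) ha1 ha2 hB.1 hB.2
    rw [diffAgents_update_right] at h
    omega

theorem statement16 {N X : Type*} [Fintype N] [Nonempty N] [Fintype X] [DecidableEq N]
    (i : N) (𝓡 𝓡' : N → Set (Pref X))
    (hAgree : ∀ j, j ≠ i → 𝓡' j = 𝓡 j)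
    (hNC : ∀ j, NonConditional (𝓡 j)) (hNC' : NonConditional (𝓡' i))
    (hss : 𝓡' i ⊂ 𝓡 i) (x y : X)
    (hxy : (x, y) ∈ fixedPairs (𝓡' i))
    (hS : fixedPairs (𝓡 i) = fixedPairs (𝓡' i) \ {(x, y)})
    (hnoz : ¬ ∃ z, (x, z) ∈ fixedPairs (𝓡' i) ∧ (z, y) ∈ fixedPairs (𝓡' i))
    (f : (N → Pref X) → X) (hSP : StrategyProof 𝓡 f)
    (z : X) (hzx : z ≠ x) (hzy : z ≠ y)
    (hrange' : scrRange 𝓡' f = {x, z})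
    (hrange : scrRange 𝓡 f = {x, y, z})
    (hND' : NonDictatorial 𝓡' f)
    (Rbar Rhat : N → Pref X)
    (hRbar : ∀ j, j ≠ i → Rbar j ∈ 𝓡 j) (hRhat : ∀ j, j ≠ i → Rhat j ∈ 𝓡 j)
    (ha1 : optionSet f i Rbar (𝓡' i) = {x})
    (ha2 : optionSet f i Rbar (𝓡 i) = {x, y})
    (hb1 : optionSet f i Rhat (𝓡' i) = optionSet f i Rhat (𝓡 i))
    (hb2 : optionSet f i Rhat (𝓡 i) = {z} ∨ optionSet f i Rhat (𝓡 i) = {x, z})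
    (hc : ∀ Rbar' Rhat' : N → Pref X,
      (∀ j, j ≠ i → Rbar' j ∈ 𝓡 j) → (∀ j, j ≠ i → Rhat' j ∈ 𝓡 j) →
      optionSet f i Rbar' (𝓡' i) = {x} → optionSet f i Rbar' (𝓡 i) = {x, y} →
      optionSet f i Rhat' (𝓡' i) = optionSet f i Rhat' (𝓡 i) →
      (optionSet f i Rhat' (𝓡 i) = {z} ∨ optionSet f i Rhat' (𝓡 i) = {x, z}) →
      (diffAgents i (scrRange 𝓡 f) Rbar Rhat).ncard ≤
        (diffAgents i (scrRange 𝓡 f) Rbar' Rhat').ncard)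
    (hd : ∀ j, j ≠ i → j ∉ diffAgents i (scrRange 𝓡 f) Rbar Rhat → Rbar j = Rhat j) :
    ∀ j ∈ diffAgents i (scrRange 𝓡 f) Rbar Rhat,
      FreePair (𝓡 j) x y ∧ FreePair (𝓡 j) x z :=
  statement16_general i 𝓡 𝓡' hAgree hNC hNC' hss x y hxy hS f hSP z hzx hzy hrange' hrange Rbar Rhat
    hRbar hRhat ha1 ha2 hb1 hb2 hc
end

section
/- If 𝓡_j is a non-conditional preference domain and R, R' ∈ 𝓡_j, then there exists a finite sequence of preferences R = R^1, R^2, …, R^n = R', all belonging to 𝓡_j, such that for each l ∈ {1, …, n−1} the preferences R^l and R^{l+1} differ in the ordering of exactly one pair of distinct alternatives (i.e., there is exactly one unordered pair {v, w} with v P^l w and w P^{l+1} v, and R^l and R^{l+1} agree on all other pairs). -/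
/-- Two preferences are adjacent: they differ in the ordering of exactly one
unordered pair of distinct alternatives and agree on every other pair. -/
def AdjacentOne {X : Type*} (P P' : Pref X) : Prop :=
  ∃ v w, v ≠ w ∧ P v w ∧ P' w v ∧
    ∀ s t, s ≠ t → ({s, t} : Set X) ≠ {v, w} → (P s t ↔ P' s t)

/-!
Induct on the number of pairs on which `R` and `R'` disagree. If they disagree at all, they
disagree on a pair `(a, b)` with `b` immediately below `a` in `R`: among the disagreeing pairs
take one with the fewest alternatives in between. Exchanging `a` and `b` gives a linear order
adjacent to `R` with one disagreement fewer, and it stays in the non-conditional domain: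
`(a, b)` is not a fixed pair since `R'` reverses it, and every other pair keeps its ranking.
-/

open Function Relation

theorem Relation.ReflTransGen.exists_seq {α : Type*} {r : α → α → Prop} {a b : α}
    (h : ReflTransGen r a b) :
    ∃ (n : ℕ) (f : ℕ → α), f 0 = a ∧ f n = b ∧ ∀ l < n, r (f l) (f (l + 1)) := by
  induction h with
  | refl => exact ⟨0, fun _ => a, rfl, rfl, fun l hl => absurd hl l.not_lt_zero⟩
  | @tail b c _ hbc ih =>
    obtain ⟨n, f, h0, hn, hf⟩ := ih
    refine ⟨n + 1, update f (n + 1) c, by simp [h0], update_self .., fun l hl => ?_⟩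
    rw [update_of_ne (by omega)]
    rcases Nat.lt_succ_iff_lt_or_eq.mp hl with hl | rfl
    · rw [update_of_ne (by omega)]
      exact hf l hl
    · rwa [update_self, hn]

section Preferences

variable {X : Type*} {P Q : Pref X} {a b : X}

section Consecutive

variable [IsStrictTotalOrder X P]

lemma rel_left_iff_of_consecutive (hab : P a b) (hcov : ∀ z, ¬(P a z ∧ P z b)) {z : X}
    (hzb : z ≠ b) : P a z ↔ P b z := by
  refine ⟨fun haz => ?_, trans_of P hab⟩
  rcases trichotomous_of P b z with h | rfl | h
  exacts [h, absurd rfl hzb, absurd ⟨haz, h⟩ (hcov z)]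

lemma rel_right_iff_of_consecutive (hab : P a b) (hcov : ∀ z, ¬(P a z ∧ P z b)) {z : X}
    (hza : z ≠ a) : P z a ↔ P z b := by
  refine ⟨(trans_of P · hab), fun hzb => ?_⟩
  rcases trichotomous_of P z a with h | rfl | h
  exacts [h, absurd rfl hza, absurd ⟨h, hzb⟩ (hcov z)]

end Consecutive

section Swap

variable [DecidableEq X]

def swapPref (P : Pref X) (a b : X) : Pref X := P on Equiv.swap a b

lemma swapPref_apply (P : Pref X) (a b s t : X) :
    swapPref P a b s t = P (Equiv.swap a b s) (Equiv.swap a b t) := rfl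

instance [IsStrictTotalOrder X P] : IsStrictTotalOrder X (swapPref P a b) :=
  (Equiv.swap a b).injective.isStrictTotalOrder_onFun P

lemma swapPref_iff_of_consecutive [IsStrictTotalOrder X P] (hab : P a b)
    (hcov : ∀ z, ¬(P a z ∧ P z b)) {s t : X} (hst : ({s, t} : Set X) ≠ {a, b}) :
    swapPref P a b s t ↔ P s t := by
  have hl := fun z => rel_left_iff_of_consecutive (z := z) hab hcov
  have hr := fun z => rel_right_iff_of_consecutive (z := z) hab hcov
  have hirr := irrefl_of P
  rw [swapPref_apply]
  by_cases hsa : s = a <;> by_cases hsb : s = b <;> by_cases hta : t = a <;>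
    by_cases htb : t = b <;>
      simp_all [Equiv.swap_apply_of_ne_of_ne, Set.pair_comm]

lemma adjacentOne_swapPref_of_consecutive [IsStrictTotalOrder X P] (hab : P a b)
    (hcov : ∀ z, ¬(P a z ∧ P z b)) : AdjacentOne P (swapPref P a b) :=
  ⟨a, b, ne_of_irrefl hab, hab, by simpa [swapPref_apply] using hab,
    fun _ _ _ hst => (swapPref_iff_of_consecutive hab hcov hst).symm⟩

end Swap

def disagreements (P Q : Pref X) : Set (X × X) := {p | P p.1 p.2 ∧ Q p.2 p.1}

lemma disagreements_nonempty [IsStrictTotalOrder X P] [IsStrictTotalOrder X Q] (h : P ≠ Q) :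
    (disagreements P Q).Nonempty := by
  by_contra hD
  have hagree : ∀ s t, ¬(P s t ∧ Q t s) := fun s t hst => hD ⟨(s, t), hst⟩
  refine h (funext₂ fun s t => propext ⟨fun hP => ?_, fun hQ => ?_⟩)
  · rcases trichotomous_of Q s t with h | rfl | h
    exacts [h, absurd hP (irrefl_of P s), absurd ⟨hP, h⟩ (hagree s t)]
  · rcases trichotomous_of P s t with h | rfl | h
    exacts [h, absurd hQ (irrefl_of Q s), absurd ⟨h, hQ⟩ (hagree t s)]

lemma exists_consecutive_mem_disagreements [Finite X] [IsStrictTotalOrder X P]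
    [IsStrictTotalOrder X Q] (h : (disagreements P Q).Nonempty) :
    ∃ a b, (a, b) ∈ disagreements P Q ∧ ∀ z, ¬(P a z ∧ P z b) := by
  let between : X × X → Set X := fun p => {z | P p.1 z ∧ P z p.2}
  obtain ⟨⟨a, b⟩, ⟨hab, hba⟩, hmin⟩ :=
    (disagreements P Q).exists_min_image (fun p => (between p).ncard) (Set.toFinite _) h
  refine ⟨a, b, ⟨hab, hba⟩, fun z ⟨haz, hzb⟩ => ?_⟩
  have hshrink :
      ∀ p ∈ disagreements P Q, between p ⊆ between (a, b) → z ∉ between p → False :=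
    fun p hp hsub hz => (hmin p hp).not_gt <| Set.ncard_lt_ncard
      ((Set.ssubset_iff_of_subset hsub).mpr ⟨z, ⟨haz, hzb⟩, hz⟩) (Set.toFinite _)
  -- `Q` reverses one of the pairs `(a, z)`, `(z, b)`, which have fewer alternatives in between.
  rcases trichotomous_of Q z a with hza | rfl | haz'
  · exact hshrink (a, z) ⟨haz, hza⟩ (fun w hw => ⟨hw.1, trans_of P hw.2 hzb⟩)
      (fun hz => irrefl_of P z hz.2)
  · exact irrefl_of P z haz
  · exact hshrink (z, b) ⟨hzb, trans_of Q hba haz'⟩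
      (fun w hw => ⟨trans_of P haz hw.1, hw.2⟩)
      (fun hz => irrefl_of P z hz.1)

lemma disagreements_swapPref [DecidableEq X] [IsStrictTotalOrder X P] [IsStrictOrder X Q]
    (hab : (a, b) ∈ disagreements P Q) (hcov : ∀ z, ¬(P a z ∧ P z b)) :
    disagreements (swapPref P a b) Q = disagreements P Q \ {(a, b)} := by
  ext ⟨s, t⟩
  by_cases hst : ({s, t} : Set X) = {a, b}
  · rcases Set.pair_eq_pair_iff.mp hst with ⟨rfl, rfl⟩ | ⟨rfl, rfl⟩
    · simp [disagreements, swapPref_apply, asymm_of P hab.1]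
    · simp [disagreements, swapPref_apply, asymm_of Q hab.2]
  · have hne : (s, t) ≠ (a, b) := by rintro ⟨⟩; exact hst rfl
    simp [disagreements, swapPref_iff_of_consecutive hab.1 hcov hst, hne]

lemma mem_iff_of_nonConditional {B : Set (Pref X)} (hNC : NonConditional B) :
    P ∈ B ↔ IsStrictTotalOrder X P ∧ ∀ p ∈ fixedPairs B, P p.1 p.2 :=
  Set.ext_iff.mp hNC P

lemma swapPref_mem_of_nonConditional [DecidableEq X] {B : Set (Pref X)}
    (hNC : NonConditional B) (hP : P ∈ B) (hQ : Q ∈ B) (hab : (a, b) ∈ disagreements P Q)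
    (hcov : ∀ z, ¬(P a z ∧ P z b)) : swapPref P a b ∈ B := by
  obtain ⟨_, hPfix⟩ := (mem_iff_of_nonConditional hNC).mp hP
  have := ((mem_iff_of_nonConditional hNC).mp hQ).1
  refine (mem_iff_of_nonConditional hNC).mpr ⟨inferInstance, fun ⟨x, y⟩ hxy => ?_⟩
  by_cases hpair : ({x, y} : Set X) = {a, b}
  · rcases Set.pair_eq_pair_iff.mp hpair with ⟨rfl, rfl⟩ | ⟨rfl, rfl⟩
    · exact absurd (hxy.2 Q hQ) (asymm_of Q hab.2)
    · simpa [swapPref_apply] using hab.1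
  · exact (swapPref_iff_of_consecutive hab.1 hcov hpair).mpr (hPfix _ hxy)

theorem reflTransGen_adjacentOne_of_nonConditional [Finite X] {B : Set (Pref X)}
    (hNC : NonConditional B) (hP : P ∈ B) (hQ : Q ∈ B) :
    ReflTransGen (fun P P' => P' ∈ B ∧ AdjacentOne P P') P Q := by
  classical
  have := ((mem_iff_of_nonConditional hNC).mp hQ).1
  induction hn : (disagreements P Q).ncard using Nat.strong_induction_on generalizing P with
  | _ n ih =>
  have := ((mem_iff_of_nonConditional hNC).mp hP).1
  by_cases hPQ : P = Q
  · exact hPQ ▸ ReflTransGen.refl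
  obtain ⟨a, b, hab, hcov⟩ := exists_consecutive_mem_disagreements (disagreements_nonempty hPQ)
  have hswap := swapPref_mem_of_nonConditional hNC hP hQ hab hcov
  refine .head ⟨hswap, adjacentOne_swapPref_of_consecutive hab.1 hcov⟩ (ih _ ?_ hswap rfl)
  rw [← hn, disagreements_swapPref hab hcov]
  exact Set.ncard_sdiff_singleton_lt_of_mem hab (Set.toFinite _)

end Preferences

theorem statement17 {X : Type*} [Fintype X]
    (B : Set (Pref X)) (hNC : NonConditional B)
    (R R' : Pref X) (hR : R ∈ B) (hR' : R' ∈ B) :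
    ∃ (n : ℕ) (seq : ℕ → Pref X), seq 0 = R ∧ seq n = R' ∧
      (∀ l ≤ n, seq l ∈ B) ∧ ∀ l < n, AdjacentOne (seq l) (seq (l + 1)) := by
  obtain ⟨n, seq, h0, hn, hstep⟩ :=
    (reflTransGen_adjacentOne_of_nonConditional hNC hR hR').exists_seq
  refine ⟨n, seq, h0, hn, fun l hl => ?_, fun l hl => (hstep l hl).2⟩
  cases l with
  | zero => exact h0 ▸ hR
  | succ k => exact (hstep k (by omega)).1
end
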